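/- Let X be a pointed finitely complete category. If for every object B the kernel functor Ker_B : Pt_X(B) → X reflects monomorphisms, then for every object B it reflects terminal objects. -/
import Mathlib


open CategoryTheory CategoryTheory.Limits

universe v u

noncomputable section

variable {C : Type u} [Category.{v} C]

/-- The category of points over `B`: split epimorphisms over `B` with a chosen section. -/
structure Pt (B : C) where
  X : C
  p : X ⟶ B
  s : B ⟶ X
  sec : s ≫ p = 𝟙 B

@[ext]
structure PtHom {B : C} (P Q : Pt B) where
  hom : P.X ⟶ Q.X
  wp : hom ≫ Q.p = P.p
  ws : P.s ≫ hom = Q.s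

attribute [simp] Pt.sec PtHom.wp PtHom.ws

instance {B : C} : Category (Pt B) where
  Hom := PtHom
  id P := ⟨𝟙 P.X, by simp, by simp⟩
  comp f g := ⟨f.hom ≫ g.hom, by rw [Category.assoc, g.wp, f.wp],
    by rw [← Category.assoc, f.ws, g.ws]⟩
  id_comp f := by apply PtHom.ext; exact Category.id_comp f.hom
  comp_id f := by apply PtHom.ext; exact Category.comp_id f.hom
  assoc f g h := by apply PtHom.ext; exact Category.assoc f.hom g.hom h.hom

@[simp] lemma PtHom.comp_hom {B : C} {P Q R : Pt B} (f : P ⟶ Q) (g : Q ⟶ R) :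
    (f ≫ g).hom = f.hom ≫ g.hom := rfl

@[simp] lemma PtHom.id_hom {B : C} (P : Pt B) : (𝟙 P : P ⟶ P).hom = 𝟙 P.X := rfl

variable [HasZeroMorphisms C] [HasFiniteLimits C]

/-- The kernel functor `Pt_C(B) ⥤ C`, sending a point `(A, α, β)` to `Ker α`. -/
def KerF (B : C) : Pt B ⥤ C where
  obj P := kernel P.p
  map {P Q} f := kernel.map P.p Q.p f.hom (𝟙 B) (by simp)
  map_id P := by
    apply equalizer.hom_ext
    simp [kernel.map]
  map_comp f g := by
    apply equalizer.hom_ext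
    simp [kernel.map]

/-- If for every object `B` the kernel functor `Ker_B : Pt_C(B) ⥤ C` reflects
monomorphisms, then for every `B` it reflects terminal objects. -/
theorem stmt8 [HasZeroObject C]
    (hmono : ∀ (B : C) {P Q : Pt B} (f : P ⟶ Q), Mono ((KerF B).map f) → Mono f) :
    ∀ (B : C) (P : Pt B), IsTerminal ((KerF B).obj P) → Nonempty (IsTerminal P) := by
  intro B P hT
  -- The terminal object of `Pt B`
  let T : Pt B := ⟨B, 𝟙 B, 𝟙 B, by simp⟩
  have hTterm : IsTerminal T := by
    refine IsTerminal.ofUniqueHom (fun Q => ⟨Q.p, by simp [T], by simp [T]⟩) ?_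
    intro Q m
    apply PtHom.ext
    have := m.wp
    simpa [T] using this
  -- The comparison map `t : P ⟶ T`
  let t : P ⟶ T := ⟨P.p, by simp [T], by simp [T]⟩
  have hmonoKer : Mono ((KerF B).map t) := ⟨fun u v _ => hT.hom_ext u v⟩
  have ht : Mono t := hmono B t hmonoKer
  have hsplit : IsSplitEpi t :=
    ⟨⟨⟨⟨P.s, by simp [T], by simp [T]⟩, by apply PtHom.ext; simp [t, T]⟩⟩⟩
  have : IsIso t := isIso_of_mono_of_isSplitEpi t
  exact ⟨hTterm.ofIso (asIso t).symm⟩
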